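/- arXiv:0802.2752 — 4 statements merged into one kernel-verified Lean document; each statement's English description precedes it below -/
import Mathlib

section
/- For all integers p < m < n, the coordinatewise addition map ι : J(n,m) × J(m,p) → J(n,p), (s,t) ↦ s + t, is injective and is a topological embedding (a homeomorphism onto its image), and its image is exactly the set of sequences u ∈ J(n,p) whose m-th coordinate is zero: {u ∈ J(n,p) : u m = 0}. -/
/-- For integers `m < n`, `J n m` is the set of sequences `t : ℤ → ℝ` with `t i ≥ 0`
for all `i`, and `t i = 0` unless `m < i < n`, topologized as a subspace of `ℤ → ℝ`. -/
def J (n m : ℤ) : Set (ℤ → ℝ) :=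
  {t | (∀ i, 0 ≤ t i) ∧ ∀ i, ¬ (m < i ∧ i < n) → t i = 0}

/-- For all integers `p < m < n`, the coordinatewise addition map
`ι : J(n,m) × J(m,p) → J(n,p)`, `(s,t) ↦ s + t`, is injective and is a topological
embedding, and its image is exactly the set of sequences `u ∈ J(n,p)` whose `m`-th
coordinate is `0`. -/
theorem stmt1 (p m n : ℤ) (hpm : p < m) (hmn : m < n)
    (ι : J n m × J m p → J n p)
    (hι : ∀ x : J n m × J m p, ((ι x : ℤ → ℝ)) = (x.1 : ℤ → ℝ) + (x.2 : ℤ → ℝ)) :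
    Function.Injective ι ∧ Topology.IsEmbedding ι ∧
      Set.range ι = {u : J n p | (u : ℤ → ℝ) m = 0} := by
  classical
  have mem1 : ∀ u : J n p, (fun i => if m < i then (u : ℤ → ℝ) i else 0) ∈ J n m := by
    rintro ⟨u, hpos, hsupp⟩
    refine ⟨fun i => ?_, fun i hi => ?_⟩
    · dsimp only; split
      · exact hpos i
      · exact le_refl 0
    · dsimp only; split
      · rename_i h
        exact hsupp i (fun ⟨_, h2⟩ => hi ⟨h, h2⟩)
      · rfl
  have mem2 : ∀ u : J n p, (fun i => if i < m then (u : ℤ → ℝ) i else 0) ∈ J m p := by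
    rintro ⟨u, hpos, hsupp⟩
    refine ⟨fun i => ?_, fun i hi => ?_⟩
    · dsimp only; split
      · exact hpos i
      · exact le_refl 0
    · dsimp only; split
      · rename_i h
        exact hsupp i (fun ⟨h1, _⟩ => hi ⟨h1, h⟩)
      · rfl
  set ψ : J n p → J n m × J m p := fun u =>
    (⟨fun i => if m < i then (u : ℤ → ℝ) i else 0, mem1 u⟩,
     ⟨fun i => if i < m then (u : ℤ → ℝ) i else 0, mem2 u⟩) with hψ
  -- key support facts
  have hs0 : ∀ (s : J n m) (i : ℤ), ¬ m < i → (s : ℤ → ℝ) i = 0 := by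
    rintro ⟨s, _, hsupp⟩ i hi
    exact hsupp i (fun ⟨h1, _⟩ => hi h1)
  have ht0 : ∀ (t : J m p) (i : ℤ), m ≤ i → (t : ℤ → ℝ) i = 0 := by
    rintro ⟨t, _, hsupp⟩ i hi
    exact hsupp i (fun ⟨_, h2⟩ => absurd hi (not_le.2 h2))
  have hleft : Function.LeftInverse ψ ι := by
    intro x
    obtain ⟨s, t⟩ := x
    have h := hι (s, t)
    refine Prod.ext (Subtype.ext (funext fun i => ?_)) (Subtype.ext (funext fun i => ?_))
    · show (if m < i then (↑(ι (s, t)) : ℤ → ℝ) i else 0) = (s : ℤ → ℝ) i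
      rw [h]
      by_cases hmi : m < i
      · simp only [hmi, if_true, Pi.add_apply, ht0 t i hmi.le, add_zero]
      · simp [hmi, hs0 s i hmi]
    · show (if i < m then (↑(ι (s, t)) : ℤ → ℝ) i else 0) = (t : ℤ → ℝ) i
      rw [h]
      by_cases him : i < m
      · simp only [him, if_true, Pi.add_apply,
          hs0 s i (by omega), zero_add]
      · simp [him, ht0 t i (by omega)]
  have hcι : Continuous ι := by
    rw [continuous_induced_rng]
    have : (Subtype.val ∘ ι) = fun x : J n m × J m p => (x.1 : ℤ → ℝ) + (x.2 : ℤ → ℝ) :=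
      funext hι
    rw [this]
    exact ((continuous_subtype_val.comp continuous_fst).add
      (continuous_subtype_val.comp continuous_snd))
  have hcψ : Continuous ψ := by
    refine Continuous.prodMk ?_ ?_
    · apply Continuous.subtype_mk
      apply continuous_pi
      intro i
      by_cases h : m < i <;> simp only [h, if_true, if_false] <;>
        first
          | exact (continuous_apply i).comp continuous_subtype_val
          | exact continuous_const
    · apply Continuous.subtype_mk
      apply continuous_pi
      intro i
      by_cases h : i < m <;> simp only [h, if_true, if_false] <;>
        first
          | exact (continuous_apply i).comp continuous_subtype_val
          | exact continuous_const
  have hinj : Function.Injective ι := hleft.injective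
  refine ⟨hinj, hleft.isEmbedding hcψ hcι, ?_⟩
  ext u
  simp only [Set.mem_range, Set.mem_setOf_eq]
  constructor
  · rintro ⟨⟨s, t⟩, rfl⟩
    rw [hι (s, t)]
    simp [hs0 s m (lt_irrefl m), ht0 t m le_rfl]
  · intro hum
    refine ⟨ψ u, Subtype.ext (funext fun i => ?_)⟩
    rw [hι (ψ u)]
    show (if m < i then (u : ℤ → ℝ) i else 0) + (if i < m then (u : ℤ → ℝ) i else 0)
      = (u : ℤ → ℝ) i
    rcases lt_trichotomy m i with h | h | h
    · simp [h, not_lt.2 h.le]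
    · subst h; simp [hum]
    · simp [h, not_lt.2 h.le]
end

section
/- For all integers p < m < n, the coordinatewise addition map J(n,m) × J(m,p) → J(n,p), (s,t) ↦ s + t, is a proper map: the preimage of every compact subset of J(n,p) is compact (IsProperMap). -/
open Set

section NonnegSequences

variable {α : Type*}

lemma IsCompact.bddAbove_pi {K : Set (α → ℝ)} (hK : IsCompact K) : BddAbove K :=
  _root_.bddAbove_pi.2 fun a => (hK.image (continuous_apply a)).bddAbove

lemma isCompact_preimage_val_Iic {S : Set (α → ℝ)} (hS : IsClosed S) (hS₀ : S ⊆ Ici 0)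
    (C : α → ℝ) : IsCompact (((↑) : S → α → ℝ) ⁻¹' Iic C) := by
  rw [Topology.IsEmbedding.subtypeVal.isCompact_iff, Subtype.image_preimage_coe]
  have hbox : S ∩ Iic C = S ∩ Icc 0 C := by
    ext t
    exact and_congr_right fun ht => (and_iff_right (hS₀ ht)).symm
  rw [hbox]
  exact isCompact_Icc.inter_left hS

lemma isProperMap_add_of_subset_Ici [Countable α] {S T : Set (α → ℝ)} (hS : IsClosed S) (hT : IsClosed T)
    (hS₀ : S ⊆ Ici 0) (hT₀ : T ⊆ Ici 0) :
    IsProperMap fun x : S × T => (x.1 : α → ℝ) + x.2 := by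
  have hcont : Continuous fun x : S × T => (x.1 : α → ℝ) + x.2 := by fun_prop
  refine (isProperMap_iff_isCompact_preimage.2 ⟨hcont, fun K hK => ?_⟩)
  obtain ⟨C, hC⟩ := hK.bddAbove_pi
  refine ((isCompact_preimage_val_Iic hS hS₀ C).prod (isCompact_preimage_val_Iic hT hT₀ C))
    |>.of_isClosed_subset (hK.isClosed.preimage hcont) ?_
  rintro ⟨s, t⟩ hst
  have hsum : (s : α → ℝ) + t ≤ C := hC hst
  exact ⟨(le_add_of_nonneg_right (hT₀ t.2)).trans hsum,
    (le_add_of_nonneg_left (hS₀ s.2)).trans hsum⟩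

end NonnegSequences

lemma isClosed_J (n m : ℤ) : IsClosed (J n m) := by
  have hJ : J n m = (⋂ i, {t : ℤ → ℝ | 0 ≤ t i}) ∩
      ⋂ i ∈ {i : ℤ | ¬ (m < i ∧ i < n)}, {t : ℤ → ℝ | t i = 0} := by
    ext t
    simp [J]
  rw [hJ]
  exact (isClosed_iInter fun i => isClosed_le continuous_const (continuous_apply i)).inter
    (isClosed_biInter fun i _ => isClosed_eq (continuous_apply i) continuous_const)

lemma J_subset_Ici (n m : ℤ) : J n m ⊆ Ici 0 := fun _ ht => ht.1

theorem stmt2_general (p m n : ℤ)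
    (ι : J n m × J m p → J n p)
    (hι : ∀ x : J n m × J m p, ((ι x : ℤ → ℝ)) = (x.1 : ℤ → ℝ) + (x.2 : ℤ → ℝ)) :
    IsProperMap ι := by
  have hval : (↑) ∘ ι = fun x : J n m × J m p => (x.1 : ℤ → ℝ) + x.2 := funext hι
  have hcont : Continuous ι :=
    continuous_induced_rng.2 (hval ▸ by fun_prop)
  refine isProperMap_of_comp_of_t2 hcont continuous_subtype_val ?_
  rw [hval]
  exact isProperMap_add_of_subset_Ici (isClosed_J n m) (isClosed_J m p)
    (J_subset_Ici n m) (J_subset_Ici m p)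

/-- For all integers `p < m < n`, the coordinatewise addition map
`J(n,m) × J(m,p) → J(n,p)`, `(s,t) ↦ s + t`, is a proper map: the preimage of every
compact subset is compact. -/
theorem stmt2 (p m n : ℤ) (hpm : p < m) (hmn : m < n)
    (ι : J n m × J m p → J n p)
    (hι : ∀ x : J n m × J m p, ((ι x : ℤ → ℝ)) = (x.1 : ℤ → ℝ) + (x.2 : ℤ → ℝ)) :
    IsProperMap ι :=
  stmt2_general p m n ι hι
end

section
/- For every q ≥ 1, the one-point compactification OnePoint (Fin q → ℝ≥0) of the quadrant ℝ₊^q is a contractible topological space. (This is the key feature that J(n,m)⁺ ∧ Y is an iterated cone c^{n-m-1}(Y), specialized to the contractibility of the compactified morphism spaces of the category 𝒥.) -/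
/-!
If `h : X × ℝ≥0 → X` is a proper homotopy starting at the identity, then in `OnePoint X` every
point is pushed continuously to `∞`: reparametrising time by `[0, 1] ≅ [0, ∞]` and sending
everything at infinite time or at the point `∞` to `∞` is continuous, because `OnePoint (X × ℝ≥0)`
is the smash product of `OnePoint X` and `[0, ∞]`. This null-homotopes the identity. For the
quadrant `ℝ≥0^q` with `q ≥ 1` the translation `h (x, s) = x + (s, …, s)` is such a homotopy.
-/

open Filter Topology Set NNReal

namespace OnePoint

variable {X Y : Type*}

/-- Collapsing the wedge `OnePoint X ∨ OnePoint Y` to `∞` identifies `OnePoint (X × Y)` with the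
smash product `OnePoint X ∧ OnePoint Y`. -/
def smash (p : OnePoint X × OnePoint Y) : OnePoint (X × Y) :=
  p.1.elim ∞ fun x => p.2.elim ∞ fun y => ↑(x, y)

@[simp] lemma smash_coe_coe (x : X) (y : Y) :
    smash ((x : OnePoint X), (y : OnePoint Y)) = ↑(x, y) :=
  rfl

@[simp] lemma smash_infty_left (b : OnePoint Y) : smash ((∞ : OnePoint X), b) = ∞ := rfl

@[simp] lemma smash_infty_right (a : OnePoint X) : smash (a, (∞ : OnePoint Y)) = ∞ := by
  induction a using OnePoint.rec <;> rfl

lemma preimage_smash_image_coe (s : Set (X × Y)) :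
    smash ⁻¹' (((↑) : X × Y → OnePoint (X × Y)) '' s) =
      Prod.map ((↑) : X → OnePoint X) ((↑) : Y → OnePoint Y) '' s := by
  ext ⟨a, b⟩
  induction a using OnePoint.rec <;> induction b using OnePoint.rec <;> simp

lemma image_coe_preimage_coe {s : Set (OnePoint X)} (h : ∞ ∉ s) :
    ((↑) : X → OnePoint X) '' ((↑) ⁻¹' s) = s :=
  image_preimage_eq_of_subset fun _ hz => ne_infty_iff_exists.1 (ne_of_mem_of_not_mem hz h)

variable [TopologicalSpace X] [TopologicalSpace Y]

theorem continuous_smash [LocallyCompactSpace X] [T2Space X] [LocallyCompactSpace Y] [T2Space Y] :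
    Continuous (smash : OnePoint X × OnePoint Y → OnePoint (X × Y)) := by
  have hcoe := isOpenEmbedding_coe (X := X) |>.prodMap (isOpenEmbedding_coe (X := Y))
  refine continuous_def.2 fun s hs => ?_
  by_cases h : ∞ ∈ s
  · rw [← isClosed_compl_iff, ← preimage_compl,
      ← image_coe_preimage_coe (s := sᶜ) (by simpa using h), preimage_smash_image_coe]
    exact ((isOpen_iff_of_mem' h).1 hs).1.image hcoe.continuous |>.isClosed
  · rw [← image_coe_preimage_coe h, preimage_smash_image_coe]
    exact hcoe.isOpenMap _ ((isOpen_iff_of_notMem h).1 hs)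

/-- `OnePoint ℝ≥0 ≃ₜ ℝ≥0∞ ≃ₜ [0, 1]` turns the unit interval into a path from `0` to `∞`. -/
noncomputable def nnrealPathZeroInfty : Path ((0 : ℝ≥0) : OnePoint ℝ≥0) ∞ where
  toFun t := (equivOfIsEmbeddingOfRangeEq ⊤ _ ENNReal.isEmbedding_coe ENNReal.range_coe).symm
    (ENNReal.orderIsoUnitIntervalBirational.symm t)
  continuous_toFun := by fun_prop
  source' := (Homeomorph.symm_apply_eq _).2 ENNReal.orderIsoUnitIntervalBirational.symm.map_bot
  target' := (Homeomorph.symm_apply_eq _).2 ENNReal.orderIsoUnitIntervalBirational.symm.map_top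

theorem contractibleSpace_of_proper_deformation [LocallyCompactSpace X] [T2Space X]
    (h : X × ℝ≥0 → X) (hc : Continuous h) (h_zero : ∀ x, h (x, 0) = x)
    (h_proper : Tendsto h (cocompact _) (cocompact X)) : ContractibleSpace (OnePoint X) := by
  have hmap : Continuous (OnePoint.map h) :=
    continuous_map hc (by simpa only [coclosedCompact_eq_cocompact])
  let H : (ContinuousMap.id _).Homotopy (ContinuousMap.const (OnePoint X) ∞) :=
    { toFun := fun p => OnePoint.map h (smash (p.2, nnrealPathZeroInfty p.1))
      continuous_toFun := hmap.comp <| continuous_smash.comp <|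
        continuous_snd.prodMk (nnrealPathZeroInfty.continuous.comp continuous_fst)
      map_zero_left := fun a => by induction a using OnePoint.rec <;> simp [h_zero]
      map_one_left := fun a => by simp }
  exact (contractible_iff_id_nullhomotopic _).2 ⟨∞, ⟨H⟩⟩

end OnePoint

theorem Pi.tendsto_add_const_cocompact {ι : Type*} [Nonempty ι] :
    Tendsto (fun p : (ι → ℝ≥0) × ℝ≥0 => p.1 + Function.const ι p.2) (cocompact _)
      (cocompact _) := by
  refine hasBasis_cocompact.tendsto_iff hasBasis_cocompact |>.2 fun K hK => ?_
  obtain ⟨M, hM⟩ := bddAbove_pi.2 fun i => (hK.image (continuous_apply i)).bddAbove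
  obtain ⟨i⟩ := ‹Nonempty ι›
  refine ⟨Icc 0 M ×ˢ Icc 0 (M i), isCompact_Icc.prod isCompact_Icc, fun p hp hpK => hp ?_⟩
  have hle := hM hpK
  exact ⟨⟨zero_le, le_self_add.trans hle⟩, ⟨zero_le, le_add_self.trans (hle i)⟩⟩

/-- For every `q ≥ 1`, the one-point compactification of the quadrant `ℝ₊^q`,
i.e. `OnePoint (Fin q → ℝ≥0)`, is a contractible topological space. -/
theorem stmt4 (q : ℕ) (hq : 1 ≤ q) :
    ContractibleSpace (OnePoint (Fin q → NNReal)) :=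
  have : Nonempty (Fin q) := ⟨⟨0, hq⟩⟩
  OnePoint.contractibleSpace_of_proper_deformation _ (by fun_prop) (by simp)
    Pi.tendsto_add_const_cocompact
end

section
/- The reparameterized gradient flow is parameterized by level sets: let F be a real Hilbert space, let f : F → ℝ, let c ≤ d be real numbers, and let γ : ℝ → F be a curve such that for every s ∈ Icc c d, f is differentiable at γ s, gradient f (γ s) ≠ 0, and γ satisfies HasDerivWithinAt γ ((‖gradient f (γ s)‖^2)⁻¹ • gradient f (γ s)) (Icc c d) s. If f (γ c) = c, then f (γ s) = s for every s ∈ Icc c d. (This is the assertion that a curve satisfying the differential equation dγ/ds = ∇f(γ(s))/‖∇f(γ(s))‖² with the boundary condition at the bottom level is parameterized so that f ∘ γ is the identity on [f(b), f(a)].) -/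
open Set InnerProductSpace

theorem eq_of_hasDerivWithinAt_Icc_eq {E : Type*} [NormedAddCommGroup E] [NormedSpace ℝ E]
    {f g f' : ℝ → E} {a b : ℝ}
    (hf : ∀ x ∈ Icc a b, HasDerivWithinAt f (f' x) (Icc a b) x)
    (hg : ∀ x ∈ Icc a b, HasDerivWithinAt g (f' x) (Icc a b) x) (hi : f a = g a) :
    ∀ y ∈ Icc a b, f y = g y :=
  have toRight {h : ℝ → E} (hh : ∀ x ∈ Icc a b, HasDerivWithinAt h (f' x) (Icc a b) x) :
      ∀ x ∈ Ico a b, HasDerivWithinAt h (f' x) (Ici x) x := fun x hx ↦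
    (hh x (Ico_subset_Icc_self hx)).mono_of_mem_nhdsWithin (Icc_mem_nhdsGE_of_mem hx)
  eq_of_has_deriv_right_eq (toRight hf) (toRight hg)
    (fun x hx ↦ (hf x hx).continuousWithinAt) (fun x hx ↦ (hg x hx).continuousWithinAt) hi

theorem HasGradientAt.comp_hasDerivWithinAt {F : Type*} [NormedAddCommGroup F]
    [InnerProductSpace ℝ F] [CompleteSpace F] {f : F → ℝ} {g v : F} {γ : ℝ → F} {s : Set ℝ}
    {t : ℝ} (hf : HasGradientAt f g (γ t)) (hγ : HasDerivWithinAt γ v s t) :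
    HasDerivWithinAt (fun u ↦ f (γ u)) ⟪g, v⟫_ℝ s t := by
  have h := hf.hasFDerivAt.comp_hasDerivWithinAt t hγ
  rwa [toDual_apply_apply] at h

theorem real_inner_inv_norm_sq_smul_self {F : Type*} [NormedAddCommGroup F]
    [InnerProductSpace ℝ F] {x : F} (hx : x ≠ 0) : ⟪x, (‖x‖ ^ 2)⁻¹ • x⟫_ℝ = 1 := by
  rw [real_inner_smul_right, real_inner_self_eq_norm_sq]
  exact inv_mul_cancel₀ (by positivity)

theorem stmt11_general {F : Type*} [NormedAddCommGroup F] [InnerProductSpace ℝ F]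
    [CompleteSpace F] (f : F → ℝ) (c d : ℝ) (γ : ℝ → F)
    (hf : ∀ s ∈ Set.Icc c d, DifferentiableAt ℝ f (γ s))
    (hne : ∀ s ∈ Set.Icc c d, gradient f (γ s) ≠ 0)
    (hγ : ∀ s ∈ Set.Icc c d, HasDerivWithinAt γ
      ((‖gradient f (γ s)‖ ^ 2)⁻¹ • gradient f (γ s)) (Set.Icc c d) s)
    (hc : f (γ c) = c) :
    ∀ s ∈ Set.Icc c d, f (γ s) = s := by
  have hunit : ∀ s ∈ Icc c d, HasDerivWithinAt (fun t ↦ f (γ t)) 1 (Icc c d) s := fun s hs ↦ by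
    simpa only [real_inner_inv_norm_sq_smul_self (hne s hs)] using
      (hf s hs).hasGradientAt.comp_hasDerivWithinAt (hγ s hs)
  exact eq_of_hasDerivWithinAt_Icc_eq hunit (fun s _ ↦ hasDerivWithinAt_id s _) hc

/-- The reparameterized gradient flow is parameterized by level sets: if `γ` satisfies
`dγ/ds = ∇f(γ(s))/‖∇f(γ(s))‖²` on `[c,d]` (with `f` differentiable and `∇f ≠ 0` along
`γ` there), and `f (γ c) = c`, then `f (γ s) = s` for every `s ∈ [c,d]`. -/
theorem stmt11 {F : Type*} [NormedAddCommGroup F] [InnerProductSpace ℝ F]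
    [CompleteSpace F] (f : F → ℝ) (c d : ℝ) (hcd : c ≤ d) (γ : ℝ → F)
    (hf : ∀ s ∈ Set.Icc c d, DifferentiableAt ℝ f (γ s))
    (hne : ∀ s ∈ Set.Icc c d, gradient f (γ s) ≠ 0)
    (hγ : ∀ s ∈ Set.Icc c d, HasDerivWithinAt γ
      ((‖gradient f (γ s)‖ ^ 2)⁻¹ • gradient f (γ s)) (Set.Icc c d) s)
    (hc : f (γ c) = c) :
    ∀ s ∈ Set.Icc c d, f (γ s) = s :=
  stmt11_general f c d γ hf hne hγ hc
end
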